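/- Let P_b, U_b ∈ C^{n_b×n_{b+1}} be [Δ_b]-stable on Δ_{b+1} for b = 1,…,t with P_b^{-+} = U_b^{-+} for each b. If additionally Δ₁ = (⟨n₁⟩) and Δ_{t+1} = ({j}, K^c)_{j∈K} for a nonempty K ⊆ ⟨n_{t+1}⟩, then (P₁P₂⋯P_t)^K = (U₁U₂⋯U_t)^K, i.e., the two products agree on all columns indexed by K. -/

import Mathlib

/-- Product `M 0 * M 1 * ⋯ * M (t-1)` of a chain of composable complex matrices. -/
noncomputable def chainProd : ∀ (t : ℕ) (τ : Fin (t + 1) → Type) [∀ i, Fintype (τ i)]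
    [∀ i, DecidableEq (τ i)]
    (_ : ∀ b : Fin t, Matrix (τ b.castSucc) (τ b.succ) ℂ),
    Matrix (τ 0) (τ (Fin.last t)) ℂ
  | 0, τ, _, _, _ => (1 : Matrix (τ 0) (τ 0) ℂ)
  | (t + 1), τ, _, _, M =>
      M 0 * chainProd t (fun i => τ i.succ) (fun b => M b.succ)

/-- `P` is `[Δ]`-stable on `Sg`. -/
def IsStableOn {m n : ℕ} (P : Matrix (Fin m) (Fin n) ℂ)
    (Δ : Finpartition (Finset.univ : Finset (Fin m)))
    (Sg : Finpartition (Finset.univ : Finset (Fin n))) : Prop :=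
  ∀ K ∈ Δ.parts, ∀ L ∈ Sg.parts, ∀ i ∈ K, ∀ i' ∈ K,
    ∑ j ∈ L, P i j = ∑ j ∈ L, P i' j

/-! Stability makes `A ↦ ∑ j ∈ L, A i j` (for the parts `L` of the column partition) compatible
with matrix multiplication, because the row sums of the right factor are then constant on the
parts of the middle partition. Along a chain `P₁ ⋯ P_t` this gives, by induction, equal sums over
every part of `Δ_{t+1}`; the parts `{j}`, `j ∈ K`, turn those sums into single entries. -/

open Finset

variable {R : Type*} [Semiring R] {α β γ : Type*}

/-- `IsStableOn` for arbitrary finite index types and coefficients. -/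
def Matrix.IsStable [Fintype α] [Fintype β] [DecidableEq α] [DecidableEq β] (A : Matrix α β R)
    (Δ : Finpartition (univ : Finset α)) (Sg : Finpartition (univ : Finset β)) : Prop :=
  ∀ K ∈ Δ.parts, ∀ L ∈ Sg.parts, ∀ i ∈ K, ∀ i' ∈ K, ∑ j ∈ L, A i j = ∑ j ∈ L, A i' j

/-- The grouped matrices `A^{-+}` and `B^{-+}` with respect to the column partition `Sg` agree,
row by row. -/
def Matrix.GroupedEq [Fintype β] [DecidableEq β] (Sg : Finpartition (univ : Finset β))
    (A B : Matrix α β R) : Prop :=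
  ∀ L ∈ Sg.parts, ∀ i, ∑ j ∈ L, A i j = ∑ j ∈ L, B i j

theorem Matrix.sum_mul_apply [Fintype β] (A : Matrix α β R) (B : Matrix β γ R) (i : α)
    (L : Finset γ) :
    ∑ j ∈ L, (A * B) i j = ∑ k, A i k * ∑ j ∈ L, B k j := by
  simp only [Matrix.mul_apply, Finset.mul_sum]
  exact Finset.sum_comm

theorem Finpartition.sum_mul_eq_of_sum_parts_eq [Fintype β] [DecidableEq β]
    (Δ : Finpartition (univ : Finset β)) {a b s : β → R}
    (hs : ∀ K ∈ Δ.parts, ∀ k ∈ K, ∀ k' ∈ K, s k = s k')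
    (hab : ∀ K ∈ Δ.parts, ∑ k ∈ K, a k = ∑ k ∈ K, b k) :
    ∑ k, a k * s k = ∑ k, b k * s k := by
  rw [← Δ.biUnion_parts, sum_biUnion Δ.disjoint, sum_biUnion Δ.disjoint]
  refine sum_congr rfl fun K hK => ?_
  obtain ⟨k₀, hk₀⟩ := Δ.nonempty_of_mem_parts hK
  have hs₀ : ∀ k ∈ K, s k = s k₀ := fun k hk => hs K hK k hk k₀ hk₀
  calc ∑ k ∈ K, a k * s k = (∑ k ∈ K, a k) * s k₀ := by
        rw [sum_mul]; exact sum_congr rfl fun k hk => by rw [hs₀ k hk]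
    _ = (∑ k ∈ K, b k) * s k₀ := by rw [hab K hK]
    _ = ∑ k ∈ K, b k * s k := by
        rw [sum_mul]; exact sum_congr rfl fun k hk => by rw [hs₀ k hk]

theorem Matrix.isStable_one [Fintype α] [DecidableEq α] (Δ : Finpartition (univ : Finset α)) :
    (1 : Matrix α α R).IsStable Δ Δ := by
  intro K hK L hL i hi i' hi'
  have hiff : i ∈ L ↔ i' ∈ L :=
    ⟨fun h => Δ.eq_of_mem_parts hK hL hi h ▸ hi', fun h => Δ.eq_of_mem_parts hK hL hi' h ▸ hi⟩
  simp only [Matrix.one_apply, sum_ite_eq, hiff]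

theorem Matrix.IsStable.mul [Fintype α] [Fintype β] [Fintype γ] [DecidableEq α] [DecidableEq β]
    [DecidableEq γ] {A : Matrix α β R} {B : Matrix β γ R}
    {Δ : Finpartition (univ : Finset α)} {Sg : Finpartition (univ : Finset β)}
    {Θ : Finpartition (univ : Finset γ)} (hA : A.IsStable Δ Sg) (hB : B.IsStable Sg Θ) :
    (A * B).IsStable Δ Θ := by
  intro K hK L hL i hi i' hi'
  rw [Matrix.sum_mul_apply, Matrix.sum_mul_apply]
  exact Sg.sum_mul_eq_of_sum_parts_eq (fun M hM k hk k' hk' => hB M hM L hL k hk k' hk')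
    fun M hM => hA K hK M hM i hi i' hi'

theorem Matrix.GroupedEq.mul [Fintype β] [Fintype γ] [DecidableEq β] [DecidableEq γ]
    {A A' : Matrix α β R} {B B' : Matrix β γ R}
    {Sg : Finpartition (univ : Finset β)} {Θ : Finpartition (univ : Finset γ)}
    (hA : GroupedEq Sg A A') (hB : GroupedEq Θ B B') (hB' : B'.IsStable Sg Θ) :
    GroupedEq Θ (A * B) (A' * B') := by
  intro L hL i
  rw [Matrix.sum_mul_apply, Matrix.sum_mul_apply]
  simp only [hB L hL]
  exact Sg.sum_mul_eq_of_sum_parts_eq (fun M hM k hk k' hk' => hB' M hM L hL k hk k' hk')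
    fun M hM => hA M hM i

theorem chainProd_succ (t : ℕ) (τ : Fin (t + 2) → Type) [∀ i, Fintype (τ i)]
    [∀ i, DecidableEq (τ i)] (M : ∀ b : Fin (t + 1), Matrix (τ b.castSucc) (τ b.succ) ℂ) :
    chainProd (t + 1) τ M = M 0 * chainProd t (fun i => τ i.succ) (fun b => M b.succ) :=
  rfl

theorem chainProd_isStable (t : ℕ) (τ : Fin (t + 1) → Type) [∀ i, Fintype (τ i)]
    [∀ i, DecidableEq (τ i)] (Δ : ∀ i, Finpartition (univ : Finset (τ i)))
    (M : ∀ b : Fin t, Matrix (τ b.castSucc) (τ b.succ) ℂ)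
    (hM : ∀ b, (M b).IsStable (Δ b.castSucc) (Δ b.succ)) :
    (chainProd t τ M).IsStable (Δ 0) (Δ (Fin.last t)) := by
  induction t with
  | zero => exact Matrix.isStable_one (Δ 0)
  | succ t ih =>
    rw [chainProd_succ]
    exact (hM 0).mul (ih (fun i => τ i.succ) (fun i => Δ i.succ) _ fun b => hM b.succ)

theorem chainProd_groupedEq (t : ℕ) (τ : Fin (t + 1) → Type) [∀ i, Fintype (τ i)]
    [∀ i, DecidableEq (τ i)] (Δ : ∀ i, Finpartition (univ : Finset (τ i)))
    (P U : ∀ b : Fin t, Matrix (τ b.castSucc) (τ b.succ) ℂ)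
    (hU : ∀ b, (U b).IsStable (Δ b.castSucc) (Δ b.succ))
    (hPU : ∀ b, Matrix.GroupedEq (Δ b.succ) (P b) (U b)) :
    Matrix.GroupedEq (Δ (Fin.last t)) (chainProd t τ P) (chainProd t τ U) := by
  induction t with
  | zero => exact fun _ _ _ => rfl
  | succ t ih =>
    rw [chainProd_succ, chainProd_succ]
    exact (hPU 0).mul (ih (fun i => τ i.succ) (fun i => Δ i.succ) _ _ (fun b => hU b.succ)
      fun b => hPU b.succ)
      (chainProd_isStable t (fun i => τ i.succ) (fun i => Δ i.succ) _ fun b => hU b.succ)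

theorem chainProd_similar_columns_general (t : ℕ)
    (n : Fin (t + 1) → ℕ)
    (Δ : ∀ i : Fin (t + 1), Finpartition (Finset.univ : Finset (Fin (n i))))
    (P U : ∀ b : Fin t, Matrix (Fin (n b.castSucc)) (Fin (n b.succ)) ℂ)
    (hU : ∀ b : Fin t, IsStableOn (U b) (Δ b.castSucc) (Δ b.succ))
    (hsim : ∀ b : Fin t, ∀ K ∈ (Δ b.castSucc).parts, ∀ L ∈ (Δ b.succ).parts, ∀ i ∈ K,
      ∑ j ∈ L, P b i j = ∑ j ∈ L, U b i j)
    (K : Finset (Fin (n (Fin.last t))))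
    (hΔlast : (Δ (Fin.last t)).parts =
      (K.image fun j => ({j} : Finset (Fin (n (Fin.last t))))) ∪
        (if Kᶜ = ∅ then ∅ else {Kᶜ})) :
    ∀ j ∈ K, ∀ i : Fin (n 0),
      chainProd t (fun i => Fin (n i)) P i j =
      chainProd t (fun i => Fin (n i)) U i j := by
  intro j hj i
  have hPU : ∀ b, Matrix.GroupedEq (Δ b.succ) (P b) (U b) := fun b L hL i =>
    hsim b _ ((Δ b.castSucc).part_mem.2 (mem_univ i)) L hL i
      ((Δ b.castSucc).mem_part (mem_univ i))
  have hj_part : {j} ∈ (Δ (Fin.last t)).parts := by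
    rw [hΔlast]
    exact mem_union_left _ (mem_image_of_mem _ hj)
  simpa using chainProd_groupedEq t _ Δ P U hU hPU {j} hj_part i

/-- with `P b ∼ U b` for each `b`, `Δ₁ = (⟨n₁⟩)` trivial and
`Δ_{t+1} = ({j},Kᶜ)_{j∈K}` for a nonempty `K`, the products agree on the columns
indexed by `K`: `(P₁⋯P_t)^K = (U₁⋯U_t)^K`. -/
theorem chainProd_similar_columns (t : ℕ) (ht : 1 ≤ t)
    (n : Fin (t + 1) → ℕ)
    (Δ : ∀ i : Fin (t + 1), Finpartition (Finset.univ : Finset (Fin (n i))))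
    (P U : ∀ b : Fin t, Matrix (Fin (n b.castSucc)) (Fin (n b.succ)) ℂ)
    (hP : ∀ b : Fin t, IsStableOn (P b) (Δ b.castSucc) (Δ b.succ))
    (hU : ∀ b : Fin t, IsStableOn (U b) (Δ b.castSucc) (Δ b.succ))
    (hsim : ∀ b : Fin t, ∀ K ∈ (Δ b.castSucc).parts, ∀ L ∈ (Δ b.succ).parts, ∀ i ∈ K,
      ∑ j ∈ L, P b i j = ∑ j ∈ L, U b i j)
    (hΔ₁ : (Δ 0).parts = {Finset.univ})
    (K : Finset (Fin (n (Fin.last t)))) (hK : K.Nonempty)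
    (hΔlast : (Δ (Fin.last t)).parts =
      (K.image fun j => ({j} : Finset (Fin (n (Fin.last t))))) ∪
        (if Kᶜ = ∅ then ∅ else {Kᶜ})) :
    ∀ j ∈ K, ∀ i : Fin (n 0),
      chainProd t (fun i => Fin (n i)) P i j =
      chainProd t (fun i => Fin (n i)) U i j :=
  chainProd_similar_columns_general t n Δ P U hU hsim K hΔlast
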